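/- Let G be a graph, Γ the set of all cycles of G of length at most ℓ(G) (which generates the cycle space), (T, W) a rooted stable tree-decomposition of G, t a node of T, and P a t-admissible path. Then P has at most ℓ(G) − 1 vertices. -/

import Mathlib

open SimpleGraph

universe u

/-- `x` and `y` are joined by a walk in `G` all of whose vertices lie in `S`. -/
def ConnIn {V : Type u} (G : SimpleGraph V) (S : Set V) (x y : V) : Prop :=
  ∃ p : G.Walk x y, ∀ v ∈ p.support, v ∈ S

/-- `S` is a (nonempty) connected vertex set of `G`, i.e. `G[S]` is connected. -/
def IsConnSet {V : Type u} (G : SimpleGraph V) (S : Set V) : Prop :=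
  S.Nonempty ∧ ∀ x ∈ S, ∀ y ∈ S, ConnIn G S x y

/-- A tree-decomposition of `G` over the tree `T`. -/
structure TreeDecomp {V ι : Type u} (G : SimpleGraph V) (T : SimpleGraph ι) where
  isTree : T.IsTree
  bag : ι → Set V
  exists_bag : ∀ v : V, ∃ t, v ∈ bag t
  exists_bag_adj : ∀ ⦃u v : V⦄, G.Adj u v → ∃ t, u ∈ bag t ∧ v ∈ bag t
  bag_sep : ∀ ⦃t₁ t₃ : ι⦄ (p : T.Walk t₁ t₃), p.IsPath → ∀ t₂ ∈ p.support,
      bag t₁ ∩ bag t₃ ⊆ bag t₂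

/-- The union of the bags `B u` over `u ∈ A`. -/
def unionBags {V ι : Type u} (B : ι → Set V) (A : Set ι) : Set V := ⋃ u ∈ A, B u

/-- `s` is a descendant of `t` in the tree `T` rooted at `r`:
`t` lies on the (unique) `r`–`s` path. -/
def Desc {ι : Type u} (T : SimpleGraph ι) (r t s : ι) : Prop :=
  ∃ p : T.Walk r s, p.IsPath ∧ t ∈ p.support

/-- The set of descendants of `t` (the subtree `T_t`). -/
def descSet {ι : Type u} (T : SimpleGraph ι) (r t : ι) : Set ι := {s | Desc T r t s}

/-- `s` is a child of `t` in the tree `T` rooted at `r`. -/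
def IsChild {ι : Type u} (T : SimpleGraph ι) (r t s : ι) : Prop :=
  T.Adj t s ∧ Desc T r t s

/-- The vertex set of the component of `t₁` in `T` minus the edge `t₁t₂`. -/
def Side {ι : Type u} (T : SimpleGraph ι) (t₁ t₂ : ι) : Set ι :=
  {u | ∃ p : T.Walk u t₁, p.IsPath ∧ t₂ ∉ p.support}

/-- The family of bags `B` is stable: for every tree edge `t₁t₂`, both sides
induce connected subgraphs of `G`. -/
def StableBags {V ι : Type u} (G : SimpleGraph V) (T : SimpleGraph ι) (B : ι → Set V) : Prop :=
  ∀ ⦃t₁ t₂ : ι⦄, T.Adj t₁ t₂ → IsConnSet G (unionBags B (Side T t₁ t₂))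

def TreeDecomp.Stable {V ι : Type u} {G : SimpleGraph V} {T : SimpleGraph ι}
    (td : TreeDecomp G T) : Prop :=
  StableBags G T td.bag

/-- `P` is a `t`-admissible path (w.r.t. the root `r` and bags `B`): a shortest
path lying in `V_{T_t}` joining two distinct components of `G[B t]`. -/
structure IsAdmissible {V ι : Type u} (G : SimpleGraph V) (T : SimpleGraph ι)
    (B : ι → Set V) (r t : ι) {x y : V} (P : G.Walk x y) : Prop where
  isPath : P.IsPath
  support_sub : ∀ v ∈ P.support, v ∈ unionBags B (descSet T r t)
  fst_mem : x ∈ B t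
  snd_mem : y ∈ B t
  not_conn : ¬ ConnIn G (B t) x y
  minimal : ∀ ⦃x' y' : V⦄ (Q : G.Walk x' y'), Q.IsPath →
      (∀ v ∈ Q.support, v ∈ unionBags B (descSet T r t)) →
      x' ∈ B t → y' ∈ B t → ¬ ConnIn G (B t) x' y' → P.length ≤ Q.length

/-- The updated bags obtained by adding the path `P` as in `(*)`:
`W_u = V_u ∪ (V(P) ∩ V_{T_u})` for descendants `u` of `t`, and `W_u = V_u` otherwise. -/
def updatedBag {V ι : Type u} (T : SimpleGraph ι) (B : ι → Set V) (r t : ι)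
    {G : SimpleGraph V} {x y : V} (P : G.Walk x y) (u : ι) : Set V :=
  B u ∪ {v | Desc T r t u ∧ v ∈ P.support ∧ v ∈ unionBags B (descSet T r u)}

/-- The tree-width of `G`: the least `k` such that `G` has a tree-decomposition
all of whose bags have at most `k + 1` vertices. -/
noncomputable def treewidth {V : Type u} (G : SimpleGraph V) : ℕ :=
  sInf {k | ∃ (ι : Type u) (T : SimpleGraph ι) (td : TreeDecomp G T),
    ∀ t, (td.bag t).ncard ≤ k + 1}

/-- A tree-decomposition is connected if every bag is a connected vertex set. -/
def TreeDecomp.IsConn {V ι : Type u} {G : SimpleGraph V} {T : SimpleGraph ι}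
    (td : TreeDecomp G T) : Prop :=
  ∀ t, IsConnSet G (td.bag t)

/-- The connected tree-width of `G`. -/
noncomputable def ctw {V : Type u} (G : SimpleGraph V) : ℕ :=
  sInf {k | ∃ (ι : Type u) (T : SimpleGraph ι) (td : TreeDecomp G T),
    td.IsConn ∧ ∀ t, (td.bag t).ncard ≤ k + 1}

/-- The weak connected tree-width of `G`: the least `k` such that `G` has a
tree-decomposition each of whose bags is contained in a connected set of at
most `k + 1` vertices. -/
noncomputable def wctw {V : Type u} (G : SimpleGraph V) : ℕ :=
  sInf {k | ∃ (ι : Type u) (T : SimpleGraph ι) (td : TreeDecomp G T),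
    ∀ t, ∃ X, td.bag t ⊆ X ∧ IsConnSet G X ∧ X.ncard ≤ k + 1}

/-- The characteristic vector over GF(2) of the edge set of a walk. -/
noncomputable def walkChar {V : Type u} {G : SimpleGraph V} {x y : V}
    (p : G.Walk x y) : Sym2 V → ZMod 2 :=
  fun e => by classical exact if e ∈ p.edges then 1 else 0

/-- The characteristic vectors of the cycles of `G` of length at most `ℓ`. -/
def cycleChars {V : Type u} (G : SimpleGraph V) (ℓ : ℕ) : Set (Sym2 V → ZMod 2) :=
  {f | ∃ (v : V) (p : G.Walk v v), p.IsCycle ∧ p.length ≤ ℓ ∧ f = walkChar p}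

/-- The cycles of length at most `ℓ` generate the cycle space of `G` over GF(2). -/
def GeneratesLE {V : Type u} (G : SimpleGraph V) (ℓ : ℕ) : Prop :=
  ∀ ⦃v : V⦄ (p : G.Walk v v), p.IsCycle →
    walkChar p ∈ Submodule.span (ZMod 2) (cycleChars G ℓ)

/-- `ℓ(G)`: the least `ℓ` such that the cycles of length at most `ℓ`
generate the cycle space of `G`. -/
noncomputable def ellGraph {V : Type u} (G : SimpleGraph V) : ℕ :=
  sInf {ℓ | GeneratesLE G ℓ}

/-- `Γ` is a set of cycles of `G` generating its cycle space over GF(2). -/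
def GeneratesSet {V : Type u} (G : SimpleGraph V) (Γ : Set (Σ v : V, G.Walk v v)) : Prop :=
  (∀ c ∈ Γ, c.2.IsCycle) ∧
  ∀ ⦃v : V⦄ (p : G.Walk v v), p.IsCycle →
    walkChar p ∈ Submodule.span (ZMod 2) {f | ∃ c ∈ Γ, f = walkChar c.2}

/-- A bramble: a collection of connected vertex sets, any two of which have
connected union. -/
def IsBramble {V : Type u} (G : SimpleGraph V) (B : Set (Set V)) : Prop :=
  (∀ S ∈ B, IsConnSet G S) ∧ ∀ S ∈ B, ∀ S' ∈ B, IsConnSet G (S ∪ S')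

/-- `X` is a connected cover of the bramble `B`. -/
def IsConnCover {V : Type u} (G : SimpleGraph V) (B : Set (Set V)) (X : Set V) : Prop :=
  IsConnSet G X ∧ ∀ S ∈ B, (X ∩ S).Nonempty

/-- The connected order of a bramble: the least size of a connected cover. -/
noncomputable def connOrder {V : Type u} (G : SimpleGraph V) (B : Set (Set V)) : ℕ :=
  sInf {n | ∃ X, IsConnCover G B X ∧ X.ncard = n}

/-- The maximum connected order of a bramble of `G`. -/
noncomputable def cbn {V : Type u} (G : SimpleGraph V) : ℕ :=
  sSup {n | ∃ B, IsBramble G B ∧ connOrder G B = n}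

/-- A geodesic cycle: a cycle containing a shortest `G`-path between any two
of its vertices. -/
def IsGeodesicCycle {V : Type u} (G : SimpleGraph V) {v : V} (p : G.Walk v v) : Prop :=
  p.IsCycle ∧ ∀ x ∈ p.support, ∀ y ∈ p.support,
    ∃ q : G.Walk x y, q.length = G.dist x y ∧ ∀ e ∈ q.edges, e ∈ p.edges

/-- The graph obtained from `K_n` by subdividing every edge exactly `k` times:
the edge between `i < j` is replaced by the path
`i, ((i,j),0), ((i,j),1), …, ((i,j),k-1), j`. -/
def subK (n k : ℕ) : SimpleGraph (Fin n ⊕ ({p : Fin n × Fin n // p.1 < p.2} × Fin k)) :=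
  SimpleGraph.fromRel fun u v =>
    match u, v with
    | Sum.inl i, Sum.inl j => i < j ∧ k = 0
    | Sum.inl i, Sum.inr (e, c) =>
        (e.val.1 = i ∧ (c : ℕ) = 0) ∨ (e.val.2 = i ∧ (c : ℕ) = k - 1)
    | Sum.inr (e, c), Sum.inr (e', c') => e = e' ∧ (c' : ℕ) = (c : ℕ) + 1
    | _, _ => False

/-!
If `P` had at least `ℓ(G)` vertices, the cycles with at most one edge more than `P` would generate
the cycle space; we find a cycle outside their span. By minimality the interior of `P` avoids
`V_t`, hence lies below a single child `s` of `t`. Let `U` be the union of the bags on `t`'s side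
of the edge `ts`: every edge leaving `U` starts in `V_t ⊆ U`, the interior of `P` lies outside
`U`, and by stability `x` and `y` are joined by a path `W` inside `U`, so `P ∪ W` is a cycle.

Let `χ` be the indicator of the component of `x` in `G[V_t]` and give each edge `uv` not inside
`U` the weight `χ u + χ v` over GF(2). Along a closed walk the weight telescopes to the sum of
`χ c + χ d` over the excursions of the walk from `c ∈ V_t` to `d ∈ V_t` outside `U`. An excursion
with `χ c ≠ χ d` runs below `t` between two components of `G[V_t]`, so it is at least as long as
`P`; in a closed walk with at most one edge more than `P`, the rest of the walk would join `c`
and `d` by at most one edge, which is impossible. So the weight vanishes on all these cycles,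
hence on the whole cycle space, while on `P ∪ W` it is `χ x + χ y = 1`.
-/

section ConnIn

variable {V : Type u} {G : SimpleGraph V} {S : Set V} {x y z : V}

theorem ConnIn.refl (hx : x ∈ S) : ConnIn G S x x :=
  ⟨.nil, by simpa using hx⟩

theorem ConnIn.symm (h : ConnIn G S x y) : ConnIn G S y x :=
  let ⟨p, hp⟩ := h
  ⟨p.reverse, by simpa using hp⟩

theorem ConnIn.trans (h : ConnIn G S x y) (h' : ConnIn G S y z) : ConnIn G S x z := by
  obtain ⟨p, hp⟩ := h
  obtain ⟨q, hq⟩ := h'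
  refine ⟨p.append q, fun v hv => ?_⟩
  rcases (Walk.mem_support_append_iff p q).1 hv with hv | hv
  exacts [hp v hv, hq v hv]

theorem ConnIn.of_adj (hx : x ∈ S) (hy : y ∈ S) (h : G.Adj x y) : ConnIn G S x y :=
  ⟨h.toWalk, by simp [hx, hy]⟩

theorem indicator_connIn_eq {M : Type*} [Zero M] [One M] {c d : V} (h : ConnIn G S c d) :
    {v | ConnIn G S x v}.indicator (1 : V → M) c = {v | ConnIn G S x v}.indicator 1 d := by
  have hcd : ConnIn G S x c ↔ ConnIn G S x d := ⟨fun h' => h'.trans h, fun h' => h'.trans h.symm⟩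
  classical
  simp [Set.indicator_apply, hcd]

end ConnIn

namespace SimpleGraph.Walk

variable {V : Type u} {G : SimpleGraph V} {M : Type*} [AddCommMonoid M] (w : Sym2 V → M)

def edgeSum {a b : V} (q : G.Walk a b) : M := (q.edges.map w).sum

@[simp] theorem edgeSum_cons {a b c : V} (h : G.Adj a b) (q : G.Walk b c) :
    (cons h q).edgeSum w = w s(a, b) + q.edgeSum w := by
  simp [edgeSum]

@[simp] theorem edgeSum_append {a b c : V} (p : G.Walk a b) (q : G.Walk b c) :
    (p.append q).edgeSum w = p.edgeSum w + q.edgeSum w := by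
  simp [edgeSum]

theorem edgeSum_rotate [DecidableEq V] {a b : V} (c : G.Walk a a) (h : b ∈ c.support) :
    (c.rotate b h).edgeSum w = c.edgeSum w :=
  (((c.rotate_edges b h).perm).map w).sum_eq

end SimpleGraph.Walk

section CycleSpace

variable {V : Type u} {G : SimpleGraph V} {ℓ ℓ' : ℕ}

theorem SimpleGraph.Walk.IsTrail.walkChar_dotProduct [Fintype V] [DecidableEq V] {a b : V}
    {q : G.Walk a b} (hq : q.IsTrail) (w : Sym2 V → ZMod 2) : walkChar q ⬝ᵥ w = q.edgeSum w := by
  simp only [dotProduct, walkChar, ite_mul, one_mul, zero_mul, edgeSum]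
  simp_rw [← List.mem_toFinset (l := q.edges)]
  rw [Finset.sum_ite_mem, Finset.univ_inter, List.sum_toFinset w hq.edges_nodup]

theorem GeneratesLE.mono (hG : GeneratesLE G ℓ) (hle : ℓ ≤ ℓ') : GeneratesLE G ℓ' := by
  refine fun v p hp => Submodule.span_mono ?_ (hG p hp)
  rintro f ⟨v, c, hc, hlen, rfl⟩
  exact ⟨v, c, hc, hlen.trans hle, rfl⟩

theorem generatesLE_ellGraph [Finite V] (G : SimpleGraph V) : GeneratesLE G (ellGraph G) := by
  have := Fintype.ofFinite V
  have hcard : GeneratesLE G (Fintype.card V) := fun v c hc => by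
    refine Submodule.subset_span ⟨v, c, hc, ?_, rfl⟩
    have := (c.isCycle_def.1 hc).2.2.length_le_card
    rwa [List.length_tail, Walk.length_support, Nat.add_sub_cancel] at this
  exact Nat.sInf_mem (s := {ℓ | GeneratesLE G ℓ}) ⟨_, hcard⟩

theorem GeneratesLE.edgeSum_eq_zero [Finite V] (hG : GeneratesLE G ℓ) {w : Sym2 V → ZMod 2}
    (hw : ∀ ⦃v : V⦄ (c : G.Walk v v), c.IsCycle → c.length ≤ ℓ → c.edgeSum w = 0)
    {v : V} {c : G.Walk v v} (hc : c.IsCycle) : c.edgeSum w = 0 := by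
  classical
  have := Fintype.ofFinite V
  let φ := dotProductEquiv (ZMod 2) (Sym2 V) w
  have hker : Submodule.span (ZMod 2) (cycleChars G ℓ) ≤ LinearMap.ker φ := by
    refine Submodule.span_le.2 ?_
    rintro f ⟨u, d, hd, hlen, rfl⟩
    simp [φ, dotProduct_comm w, hd.isTrail.walkChar_dotProduct, hw d hd hlen]
  have := hker (hG c hc)
  simpa [φ, dotProduct_comm w, hc.isTrail.walkChar_dotProduct] using this

end CycleSpace

section BoundaryWeight

variable {V : Type u} {U : Set V} {χ : V → ZMod 2}

def LeavesThrough (G : SimpleGraph V) (U S : Set V) : Prop :=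
  ∀ ⦃u v : V⦄, G.Adj u v → u ∈ U → v ∉ U → u ∈ S

open Classical in
noncomputable def boundaryWeight (U : Set V) (χ : V → ZMod 2) : Sym2 V → ZMod 2 :=
  Sym2.lift ⟨fun u v => if u ∈ U ∧ v ∈ U then 0 else χ u + χ v, fun u v => by
    simp only [and_comm, add_comm]⟩

theorem boundaryWeight_of_mem {u v : V} (hu : u ∈ U) (hv : v ∈ U) :
    boundaryWeight U χ s(u, v) = 0 := by
  simp [boundaryWeight, hu, hv]

theorem boundaryWeight_of_notMem {u v : V} (h : u ∉ U ∨ v ∉ U) :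
    boundaryWeight U χ s(u, v) = χ u + χ v := by
  simp only [boundaryWeight, Sym2.lift_mk]
  rw [if_neg (by tauto)]

end BoundaryWeight

namespace SimpleGraph.Walk

variable {V : Type u} {G : SimpleGraph V} {S U : Set V} {χ : V → ZMod 2}

theorem edgeSum_boundaryWeight_of_support_subset {a b : V} (q : G.Walk a b)
    (hq : ∀ v ∈ q.support, v ∈ U) : q.edgeSum (boundaryWeight U χ) = 0 := by
  induction q with
  | nil => rfl
  | cons h q ih =>
    rw [edgeSum_cons, boundaryWeight_of_mem (hq _ (by simp)) (hq _ (by simp)),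
      ih fun v hv => hq v (by simp [hv]), add_zero]

theorem edgeSum_boundaryWeight_of_edges {a b : V} (q : G.Walk a b)
    (hq : ∀ ⦃u v⦄, s(u, v) ∈ q.edges → u ∉ U ∨ v ∉ U) :
    q.edgeSum (boundaryWeight U χ) = χ a + χ b := by
  induction q with
  | nil => exact (CharTwo.add_self_eq_zero _).symm
  | @cons a c b h q ih =>
    rw [edgeSum_cons, boundaryWeight_of_notMem (hq (by simp)), ih fun u v he => hq (by simp [he]),
      add_assoc, CharTwo.add_cancel_left]

theorem notMem_of_leavesThrough (hUS : LeavesThrough G U S) {a b : V} (q : G.Walk a b)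
    (ha : a ∉ U) (hq : ∀ v ∈ q.support, v ∉ S) : b ∉ U := by
  induction q with
  | nil => exact ha
  | cons h q ih =>
    refine ih (fun hc => hq _ ?_ (hUS h.symm hc ha)) fun v hv => hq v (by simp [hv])
    simp

theorem edgeSum_boundaryWeight_of_support {a b : V} (q : G.Walk a b)
    (hq : ∀ v ∈ q.support, v ≠ b → v ∉ U) :
    q.edgeSum (boundaryWeight U χ) = χ a + χ b := by
  refine q.edgeSum_boundaryWeight_of_edges fun u v he => ?_
  by_cases hu : u = b
  · exact .inr (hq v (q.snd_mem_support_of_mem_edges he) (hu ▸ (q.adj_of_mem_edges he).ne'))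
  · exact .inl (hq u (q.fst_mem_support_of_mem_edges he) hu)

theorem exists_eq_append_of_notMem_of_mem (hUS : LeavesThrough G U S) {a b : V}
    (q : G.Walk a b) (ha : a ∉ U) (hb : b ∈ U) :
    ∃ (d : V) (r₁ : G.Walk a d) (r₂ : G.Walk d b), q = r₁.append r₂ ∧ d ∈ S ∧ d ∈ U ∧
      ∀ v ∈ r₁.support, v ≠ d → v ∉ U := by
  induction q with
  | nil => exact absurd hb ha
  | @cons a c b h q ih =>
    by_cases hc : c ∈ U
    · refine ⟨c, h.toWalk, q, rfl, hUS h.symm hc ha, hc, ?_⟩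
      simp only [Adj.toWalk, support_cons, support_nil, List.mem_cons, List.not_mem_nil]
      rintro v (rfl | rfl | h) hv <;> trivial
    · obtain ⟨d, r₁, r₂, rfl, hdS, hdU, hr₁⟩ := ih hc hb
      refine ⟨d, cons h r₁, r₂, rfl, hdS, hdU, ?_⟩
      simp only [support_cons, List.mem_cons]
      rintro v (rfl | hv) hvd
      exacts [ha, hr₁ v hv hvd]

theorem edgeSum_boundaryWeight_eq_zero_of_excursions (hUS : LeavesThrough G U S) {a b : V}
    (q : G.Walk a b) (ha : a ∈ U) (hb : b ∈ U)
    (hexc : ∀ ⦃c d : V⦄ (q₁ : G.Walk a c) (e : G.Walk c d) (q₂ : G.Walk d b),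
      q = q₁.append (e.append q₂) → c ∈ S → d ∈ S → (∀ v ∈ e.support, v ∈ S ∪ Uᶜ) →
      χ c = χ d) :
    q.edgeSum (boundaryWeight U χ) = 0 := by
  match q with
  | nil => rfl
  | @cons _ _ _ c _ h q =>
    by_cases hc : c ∈ U
    · rw [edgeSum_cons, boundaryWeight_of_mem ha hc, zero_add]
      exact edgeSum_boundaryWeight_eq_zero_of_excursions hUS q hc hb
        fun c d q₁ e q₂ hq => hexc (cons h q₁) e q₂ (by rw [hq]; rfl)
    · obtain ⟨d, r₁, r₂, hq, hdS, hdU, hr₁⟩ := exists_eq_append_of_notMem_of_mem hUS q hc hb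
      have haS : a ∈ S := hUS h ha hc
      have hexcS : ∀ v ∈ (cons h r₁).support, v ∈ S ∪ Uᶜ := by
        rintro v (_ | ⟨_, hv⟩)
        · exact .inl haS
        · by_cases hvd : v = d
          exacts [.inl (hvd ▸ hdS), .inr (hr₁ v hv hvd)]
      have hχ : χ a = χ d := hexc nil (cons h r₁) r₂ (by rw [hq]; rfl) haS hdS hexcS
      have h₂ : r₂.edgeSum (boundaryWeight U χ) = 0 :=
        edgeSum_boundaryWeight_eq_zero_of_excursions hUS r₂ hdU hb fun c d q₁ e q₂ hq' =>
          hexc ((cons h r₁).append q₁) e q₂ (by rw [hq, hq', append_assoc]; rfl)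
      rw [hq, ← cons_append, edgeSum_append, h₂, add_zero, edgeSum_cons,
        boundaryWeight_of_notMem (.inr hc), r₁.edgeSum_boundaryWeight_of_support hr₁, add_assoc,
        CharTwo.add_cancel_left, hχ, CharTwo.add_self_eq_zero]
termination_by q.length
decreasing_by
  · simp
  · simp only [length_cons]; rw [hq, length_append]; omega

theorem edgeSum_boundaryWeight_eq_zero_of_length_le (hUS : LeavesThrough G U S)
    (hχ : ∀ ⦃c d : V⦄, c ∈ S → d ∈ S → G.Adj c d → χ c = χ d) {p : ℕ}
    (hlong : ∀ ⦃c d : V⦄ (e : G.Walk c d), c ∈ S → d ∈ S → (∀ v ∈ e.support, v ∈ S ∪ Uᶜ) →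
      χ c ≠ χ d → p ≤ e.length)
    {v : V} (D : G.Walk v v) (hD : D.length ≤ p + 1) : D.edgeSum (boundaryWeight U χ) = 0 := by
  classical
  by_cases hU : ∃ u ∈ D.support, u ∈ U
  · obtain ⟨u, hu, huU⟩ := hU
    rw [← D.edgeSum_rotate _ hu]
    refine edgeSum_boundaryWeight_eq_zero_of_excursions hUS _ huU huU
      fun c d q₁ e q₂ hq hc hd he => ?_
    by_contra hne
    -- `e` alone uses all but at most one edge of the closed walk
    have hback : (q₂.append q₁).length ≤ 1 := by
      have := congrArg length hq
      have := hlong e hc hd he hne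
      simp only [length_rotate, length_append] at *
      omega
    rcases Nat.le_one_iff_eq_zero_or_eq_one.1 hback with h0 | h1
    · exact hne (congrArg χ (eq_of_length_eq_zero h0)).symm
    · exact hne (hχ hc hd (adj_of_length_eq_one h1).symm)
  · rw [D.edgeSum_boundaryWeight_of_support fun u hu _ huU => hU ⟨u, hu, huU⟩,
      CharTwo.add_self_eq_zero]

end SimpleGraph.Walk

section Crossing

variable {V : Type u} {G : SimpleGraph V} {S U : Set V} {χ : V → ZMod 2}

open Walk in
theorem not_generatesLE_of_crossing_path [Finite V] (hUS : LeavesThrough G U S)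
    (hχ : ∀ ⦃c d : V⦄, c ∈ S → d ∈ S → G.Adj c d → χ c = χ d)
    {x y : V} (P : G.Walk x y) (hP : P.IsPath) (hxy : ¬ G.Adj x y)
    (hPU : ∀ v ∈ P.support, v ≠ x → v ≠ y → v ∉ U) (hχxy : χ x ≠ χ y) (hconn : ConnIn G U x y)
    (hlong : ∀ ⦃c d : V⦄ (e : G.Walk c d), c ∈ S → d ∈ S → (∀ v ∈ e.support, v ∈ S ∪ Uᶜ) →
      χ c ≠ χ d → P.length ≤ e.length) :
    ¬ GeneratesLE G (P.length + 1) := by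
  classical
  intro hG
  obtain ⟨W₀, hW₀⟩ := hconn
  have hW : W₀.bypass.reverse.IsPath := W₀.bypass_isPath.reverse
  have hWU : ∀ v ∈ W₀.bypass.reverse.support, v ∈ U := fun v hv =>
    hW₀ v (W₀.support_bypass_subset_support (by simpa using hv))
  have hne : x ≠ y := by rintro rfl; exact hχxy rfl
  have hlen : 1 < P.length := by
    by_contra! h
    rcases Nat.le_one_iff_eq_zero_or_eq_one.1 h with h | h
    exacts [hne (eq_of_length_eq_zero h), hxy (adj_of_length_eq_one h)]
  have hdisj : P.support.tail.Disjoint W₀.bypass.reverse.support.tail := by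
    intro v hvP hvW
    have hvx : v ≠ x := by
      rintro rfl
      exact (List.nodup_cons.1 (P.cons_tail_support ▸ hP.support_nodup)).1 hvP
    have hvy : v ≠ y := by
      rintro rfl
      exact (List.nodup_cons.1 (W₀.bypass.reverse.cons_tail_support ▸ hW.support_nodup)).1 hvW
    exact hPU v (List.mem_of_mem_tail hvP) hvx hvy (hWU v (List.mem_of_mem_tail hvW))
  have hPedges : ∀ ⦃u v⦄, s(u, v) ∈ P.edges → u ∉ U ∨ v ∉ U := by
    intro u v he
    have hend : ∀ w ∈ P.support, w ∈ U → w = x ∨ w = y := fun w hw hwU => by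
      by_contra! h
      exact hPU w hw h.1 h.2 hwU
    by_contra! huv
    have hadj := P.adj_of_mem_edges he
    rcases hend u (P.fst_mem_support_of_mem_edges he) huv.1 with rfl | rfl <;>
      rcases hend v (P.snd_mem_support_of_mem_edges he) huv.2 with rfl | rfl
    exacts [hadj.ne rfl, hxy hadj, hxy hadj.symm, hadj.ne rfl]
  have h0 := hG.edgeSum_eq_zero
    (fun v D _ hD => edgeSum_boundaryWeight_eq_zero_of_length_le hUS hχ hlong D hD)
    (hP.isCycle_append hW hdisj (.inl hlen))
  rw [edgeSum_append, edgeSum_boundaryWeight_of_support_subset _ hWU, add_zero,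
    P.edgeSum_boundaryWeight_of_edges hPedges] at h0
  exact hχxy (CharTwo.add_eq_zero.1 h0)

end Crossing

section TreeSides

variable {ι : Type u} {T : SimpleGraph ι} {r t s u w w' : ι}

open Walk

theorem mem_side_self (h : t ≠ s) : t ∈ Side T t s :=
  ⟨.nil, .nil, by simpa using h.symm⟩

theorem SimpleGraph.IsTree.notMem_side_of_mem_side (htree : T.IsTree) (hts : T.Adj t s)
    (h : w ∈ Side T t s) : w ∉ Side T s t := by
  rintro ⟨p₂, hp₂, ht₂⟩
  obtain ⟨p₁, hp₁, hs₁⟩ := h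
  have := (htree.existsUnique_path w t).unique hp₁ (hp₂.concat ht₂ hts.symm)
  exact hs₁ (by rw [this, support_concat]; simp)

theorem SimpleGraph.IsTree.mem_side_or_mem_side (htree : T.IsTree) (hts : T.Adj t s) (w : ι) :
    w ∈ Side T t s ∨ w ∈ Side T s t := by
  classical
  obtain ⟨p⟩ := htree.connected.preconnected w t
  by_cases hs : s ∈ p.bypass.support
  · exact .inr ⟨_, p.bypass_isPath.takeUntil hs,
      endpoint_notMem_support_takeUntil p.bypass_isPath hs hts.ne⟩
  · exact .inl ⟨_, p.bypass_isPath, hs⟩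

theorem SimpleGraph.IsTree.exists_isPath_mem_support_of_mem_side (htree : T.IsTree)
    (hts : T.Adj t s) (h₁ : w' ∈ Side T t s) (h₂ : w ∈ Side T s t) :
    ∃ q : T.Walk w' w, q.IsPath ∧ t ∈ q.support := by
  classical
  obtain ⟨q⟩ := htree.connected.preconnected w' w
  refine ⟨q.bypass, q.bypass_isPath, by_contra fun ht => ?_⟩
  obtain ⟨p₂, hp₂, ht₂⟩ := h₂
  refine htree.notMem_side_of_mem_side hts h₁ ⟨_, (q.bypass.append p₂).bypass_isPath, fun h => ?_⟩
  rcases (mem_support_append_iff _ _).1 ((q.bypass.append p₂).support_bypass_subset_support h)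
    with h | h
  exacts [ht h, ht₂ h]

theorem exists_adj_mem_side_of_desc (hu : Desc T r t u) (hne : t ≠ u) :
    ∃ s, T.Adj t s ∧ r ∈ Side T t s ∧ u ∈ Side T s t := by
  classical
  obtain ⟨p, hp, ht⟩ := hu
  have hsplit : ((p.takeUntil t ht).append (p.dropUntil t ht)).IsPath :=
    (p.take_spec ht).symm ▸ hp
  have hdrop := hp.dropUntil ht
  generalize p.dropUntil t ht = q at hsplit hdrop
  cases q with
  | nil => exact absurd rfl hne
  | @cons _ s _ hts q =>
    refine ⟨s, hts, ⟨_, hp.takeUntil ht, fun hs => ?_⟩,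
      ⟨q.reverse, hdrop.of_cons.reverse, by simpa using ((cons_isPath_iff hts q).1 hdrop).2⟩⟩
    exact hsplit.ne_of_mem_support_of_append hts.ne' hs (by simp) rfl

end TreeSides

section TreeDecomp

variable {V ι : Type u} {G : SimpleGraph V} {T : SimpleGraph ι}

@[simp] theorem mem_unionBags {B : ι → Set V} {A : Set ι} {v : V} :
    v ∈ unionBags B A ↔ ∃ u ∈ A, v ∈ B u := by
  simp [unionBags]

namespace TreeDecomp

variable (td : TreeDecomp G T) {t s : ι}

theorem mem_bag_of_mem_sides (hts : T.Adj t s) {v : V} {w w' : ι} (h₁ : w' ∈ Side T t s)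
    (h₂ : w ∈ Side T s t) (hv₁ : v ∈ td.bag w') (hv₂ : v ∈ td.bag w) : v ∈ td.bag t :=
  let ⟨q, hq, ht⟩ := td.isTree.exists_isPath_mem_support_of_mem_side hts h₁ h₂
  td.bag_sep q hq t ht ⟨hv₁, hv₂⟩

theorem leavesThrough_side (hts : T.Adj t s) :
    LeavesThrough G (unionBags td.bag (Side T t s)) (td.bag t) := by
  intro a b hab ha hb
  obtain ⟨w, hwa, hwb⟩ := td.exists_bag_adj hab
  obtain ⟨w', hw', haw'⟩ := mem_unionBags.1 ha
  refine td.mem_bag_of_mem_sides hts hw' ?_ haw' hwa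
  exact (td.isTree.mem_side_or_mem_side hts w).resolve_left
    fun hw => hb (mem_unionBags.2 ⟨w, hw, hwb⟩)

theorem mem_unionBags_descSet (hts : T.Adj t s) {r : ι} (hr : r ∈ Side T t s) {v : V}
    (hv : v ∈ td.bag t ∪ (unionBags td.bag (Side T t s))ᶜ) :
    v ∈ unionBags td.bag (descSet T r t) := by
  classical
  rcases hv with hv | hv
  · obtain ⟨p⟩ := td.isTree.connected.preconnected r t
    exact mem_unionBags.2 ⟨t, ⟨p.bypass, p.bypass_isPath, p.bypass.end_mem_support⟩, hv⟩
  · obtain ⟨w, hw⟩ := td.exists_bag v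
    have hw' := (td.isTree.mem_side_or_mem_side hts w).resolve_left
      fun hw' => hv (mem_unionBags.2 ⟨w, hw', hw⟩)
    exact mem_unionBags.2 ⟨w, td.isTree.exists_isPath_mem_support_of_mem_side hts hr hw', hw⟩

end TreeDecomp

end TreeDecomp

namespace IsAdmissible

variable {V ι : Type u} {G : SimpleGraph V} {T : SimpleGraph ι} {B : ι → Set V} {r t : ι}
  {x y : V} {P : G.Walk x y}

theorem not_adj (hP : IsAdmissible G T B r t P) : ¬ G.Adj x y :=
  fun h => hP.not_conn (.of_adj hP.fst_mem hP.snd_mem h)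

theorem length_le (hP : IsAdmissible G T B r t P) {c d : V} (e : G.Walk c d)
    (he : ∀ v ∈ e.support, v ∈ unionBags B (descSet T r t)) (hc : c ∈ B t) (hd : d ∈ B t)
    (hcd : ¬ ConnIn G (B t) c d) : P.length ≤ e.length := by
  classical
  exact (hP.minimal e.bypass e.bypass_isPath
    (fun v hv => he v (e.support_bypass_subset_support hv)) hc hd hcd).trans
    e.length_bypass_le_length

theorem notMem_bag (hP : IsAdmissible G T B r t P) {v : V} (hv : v ∈ P.support) (hvx : v ≠ x)
    (hvy : v ≠ y) : v ∉ B t := by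
  classical
  intro hvt
  have hsub := fun w hw => hP.support_sub w (P.support_takeUntil_subset_support hv hw)
  have hsub' := fun w hw => hP.support_sub w (P.support_dropUntil_subset_support hv hw)
  by_cases hxv : ConnIn G (B t) x v
  · have := hP.length_le _ hsub' hvt hP.snd_mem fun hvy => hP.not_conn (hxv.trans hvy)
    exact (Walk.length_dropUntil_lt_length hv hvx).not_ge this
  · have := hP.length_le _ hsub hP.fst_mem hvt hxv
    exact (Walk.length_takeUntil_lt_length hv hvy).not_ge this

theorem exists_adj_forall_notMem_unionBags_side (td : TreeDecomp G T)
    (hP : IsAdmissible G T td.bag r t P) :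
    ∃ s, T.Adj t s ∧ r ∈ Side T t s ∧
      ∀ v ∈ P.support, v ≠ x → v ≠ y → v ∉ unionBags td.bag (Side T t s) := by
  classical
  have hnil : ¬ P.Nil := fun h => hP.not_conn (h.eq ▸ .refl hP.fst_mem)
  obtain ⟨v₁, h, P', rfl⟩ := Walk.not_nil_iff.1 hnil
  have hv₁y : v₁ ≠ y := by rintro rfl; exact hP.not_adj h
  have hv₁ : v₁ ∉ td.bag t := hP.notMem_bag (by simp) h.ne' hv₁y
  obtain ⟨u, hu, hv₁u⟩ := mem_unionBags.1 (hP.support_sub v₁ (by simp))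
  obtain ⟨s, hts, hr, hus⟩ := exists_adj_mem_side_of_desc hu fun htu => hv₁ (htu ▸ hv₁u)
  refine ⟨s, hts, hr, fun v hv hvx hvy => ?_⟩
  have hvP' : v ∈ P'.support := by simpa [hvx] using hv
  have hxP' : x ∉ P'.support := ((Walk.cons_isPath_iff h P').1 hP.isPath).2
  refine Walk.notMem_of_leavesThrough (td.leavesThrough_side hts) (P'.takeUntil v hvP') ?_ ?_
  · intro hv₁U
    obtain ⟨w', hw', hv₁w'⟩ := mem_unionBags.1 hv₁U
    exact hv₁ (td.mem_bag_of_mem_sides hts hw' hus hv₁w' hv₁u)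
  · intro w hw
    have hwP' := P'.support_takeUntil_subset_support hvP' hw
    refine hP.notMem_bag (by simp [hwP']) (fun hwx => hxP' (hwx ▸ hwP')) fun hwy => ?_
    exact Walk.endpoint_notMem_support_takeUntil hP.isPath.of_cons hvP' hvy.symm (hwy ▸ hw)

end IsAdmissible

/-- a `t`-admissible path in a rooted stable tree-decomposition
has at most `ℓ(G) − 1` vertices. -/
theorem admissible_path_short {V ι : Type u} [Finite V] (G : SimpleGraph V)
    (T : SimpleGraph ι) (td : TreeDecomp G T) (hst : td.Stable) (r t : ι)
    {x y : V} (P : G.Walk x y) (hP : IsAdmissible G T td.bag r t P) :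
    P.length + 1 ≤ ellGraph G - 1 := by
  classical
  by_contra! hlt
  obtain ⟨s, hts, hr, hPU⟩ := hP.exists_adj_forall_notMem_unionBags_side td
  let χ : V → ZMod 2 := {v | ConnIn G (td.bag t) x v}.indicator 1
  have hχ : ∀ ⦃c d⦄, ConnIn G (td.bag t) c d → χ c = χ d := fun _ _ => indicator_connIn_eq
  have hχxy : χ x ≠ χ y := by simp [χ, ConnIn.refl hP.fst_mem, hP.not_conn]
  have hbag : td.bag t ⊆ unionBags td.bag (Side T t s) :=
    fun v hv => mem_unionBags.2 ⟨t, mem_side_self hts.ne, hv⟩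
  exact not_generatesLE_of_crossing_path (td.leavesThrough_side hts)
    (fun c d hc hd hcd => hχ (.of_adj hc hd hcd)) P hP.isPath hP.not_adj hPU hχxy
    ((hst hts).2 x (hbag hP.fst_mem) y (hbag hP.snd_mem))
    (fun c d e hc hd he hne => hP.length_le e
      (fun v hv => td.mem_unionBags_descSet hts hr (he v hv)) hc hd fun hcd => hne (hχ hcd))
    ((generatesLE_ellGraph G).mono (by omega))
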